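/- For every real number $q \geq 2$, the function $f_q(x) = q^3 - q^2 x - \frac{q+1}{2}x^2(x-1)$ satisfies $f_q\left(\sqrt[3]{2q^2} - \frac{\sqrt[3]{4q}}{3} + \frac{1}{6}\right) > 0$. -/
import Mathlib



private lemma stmt8_aux (w : ℝ) (hw0 : 0 ≤ w) :
    ((w + 2) ^ 3 / 4) ^ 3 - ((w + 2) ^ 3 / 4) ^ 2 * ((w + 2) ^ 2 / 2 - (w + 2) / 3 + 1 / 6) -
      ((w + 2) ^ 3 / 4 + 1) / 2 * ((w + 2) ^ 2 / 2 - (w + 2) / 3 + 1 / 6) ^ 2 *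
        ((w + 2) ^ 2 / 2 - (w + 2) / 3 + 1 / 6 - 1) > 0 := by
  nlinarith [mul_nonneg hw0 (sq_nonneg (47 * w - 33)), hw0,
    pow_nonneg hw0 4, pow_nonneg hw0 5, pow_nonneg hw0 6, pow_nonneg hw0 7]

/-- For every real `q ≥ 2`, `f_q(x) = q³ - q²x - ((q+1)/2)x²(x-1)` is positive at
`x = (2q²)^{1/3} - (4q)^{1/3}/3 + 1/6`. -/
theorem stmt8 (q : ℝ) (hq : 2 ≤ q) :
    q ^ 3 - q ^ 2 * ((2 * q ^ 2) ^ ((1 : ℝ) / 3) - (4 * q) ^ ((1 : ℝ) / 3) / 3 + 1 / 6)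
      - (q + 1) / 2 * ((2 * q ^ 2) ^ ((1 : ℝ) / 3) - (4 * q) ^ ((1 : ℝ) / 3) / 3 + 1 / 6) ^ 2
        * (((2 * q ^ 2) ^ ((1 : ℝ) / 3) - (4 * q) ^ ((1 : ℝ) / 3) / 3 + 1 / 6) - 1) > 0 := by
  set v : ℝ := (4 * q) ^ ((1 : ℝ) / 3) with hv
  have h4q : (0:ℝ) ≤ 4 * q := by linarith
  have hv0 : 0 ≤ v := Real.rpow_nonneg h4q _
  have hv3 : v ^ 3 = 4 * q := by
    rw [hv, ← Real.rpow_natCast ((4*q) ^ ((1:ℝ)/3)) 3, ← Real.rpow_mul h4q]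
    norm_num
  have hvhalf : 0 ≤ v ^ 2 / 2 := by positivity
  have hu : (2 * q ^ 2) ^ ((1 : ℝ) / 3) = v ^ 2 / 2 := by
    have h1 : (2 * q ^ 2 : ℝ) = (v ^ 2 / 2) ^ (3 : ℕ) := by
      have : (v ^ 2 / 2) ^ (3:ℕ) = (v ^ 3) ^ 2 / 8 := by ring
      rw [this, hv3]; ring
    rw [h1, ← Real.rpow_natCast (v ^ 2 / 2) 3, ← Real.rpow_mul hvhalf]
    norm_num
  have hv2 : 2 ≤ v := by nlinarith [sq_nonneg (v + 2), sq_nonneg (v - 2)]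
  have hqv : q = v ^ 3 / 4 := by linarith
  rw [hu, hqv]
  have h := stmt8_aux (v - 2) (by linarith)
  have hvw : v - 2 + 2 = v := by ring
  rw [hvw] at h
  linarith [h]
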